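/- arXiv:2508.00279 — 2 statements merged into one kernel-verified Lean document; each statement's English description precedes it below -/
import Mathlib

section
/- Let I = [A,B] ⊂ (-b,b), ψ ∈ C^∞ with Γ = {(t,ψ(t)) : t ∈ I} ⊂ (-b,b) × (c,d), 0 < c < d, and suppose ψ(t) - t·ψ'(t) ≠ 0 on I. Let I' be a compact interval with I' contained in the interior of I. Then there exists B₁ > 0 such that for all sufficiently small δ > 0: every point (ξ₁, ξ₂) with ξ₁ ∈ I' and |ξ₂ - ψ(ξ₁)| ≤ δ lies on sΓ for some s with |1 - s| ≤ B₁δ. -/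
set_option maxHeartbeats 1000000


open Set

/-- Every point within vertical distance δ of the curve Γ lies on a dilate sΓ
with |1 - s| ≤ B₁δ. -/
theorem stmt_1 (A B b c d A' B' : ℝ) (hAB : A < B) (ψ : ℝ → ℝ)
    (hb : 0 < b) (hI : Icc A B ⊆ Ioo (-b) b) (hc : 0 < c) (hcd : c < d)
    (hψ : ContDiffOn ℝ (⊤ : ℕ∞) ψ (Icc A B))
    (hΓ : ∀ t ∈ Icc A B, ψ t ∈ Ioo c d)
    (htan : ∀ t ∈ Icc A B, ψ t - t * deriv ψ t ≠ 0)
    (hA' : A < A') (hI' : A' ≤ B') (hB' : B' < B) :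
    ∃ B₁ > (0:ℝ), ∃ δ₀ > (0:ℝ), ∀ δ : ℝ, 0 < δ → δ ≤ δ₀ →
      ∀ ξ₁ ∈ Icc A' B', ∀ ξ₂ : ℝ, |ξ₂ - ψ ξ₁| ≤ δ →
        ∃ s : ℝ, |1 - s| ≤ B₁ * δ ∧
          ∃ t ∈ Icc A B, (ξ₁, ξ₂) = s • ((t, ψ t) : ℝ × ℝ) := by
  have hK : UniqueDiffOn ℝ (Icc A B) := uniqueDiffOn_Icc hAB
  set φ := derivWithin ψ (Icc A B) with hφdef
  have hφc : ContinuousOn φ (Icc A B) := hψ.continuousOn_derivWithin hK (by simp)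
  have hdiff : DifferentiableOn ℝ ψ (Icc A B) := hψ.differentiableOn (by simp)
  have hdAt : ∀ t ∈ Ioo A B, DifferentiableAt ℝ ψ t := fun t ht =>
    (hdiff t (Ioo_subset_Icc_self ht)).differentiableAt (Icc_mem_nhds ht.1 ht.2)
  have hφeq : ∀ t ∈ Ioo A B, φ t = deriv ψ t := fun t ht =>
    (hdAt t ht).derivWithin (hK t (Ioo_subset_Icc_self ht))
  -- slightly larger compact subinterval J of the open interval
  set A'' := (A + A') / 2 with hA''def
  set B'' := (B' + B) / 2 with hB''def
  have hA''1 : A < A'' := by simp only [hA''def]; linarith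
  have hA''2 : A'' < A' := by simp only [hA''def]; linarith
  have hB''1 : B' < B'' := by simp only [hB''def]; linarith
  have hB''2 : B'' < B := by simp only [hB''def]; linarith
  have hJsub : Icc A'' B'' ⊆ Ioo A B := fun x hx => ⟨lt_of_lt_of_le hA''1 hx.1, lt_of_le_of_lt hx.2 hB''2⟩
  have hJK : Icc A'' B'' ⊆ Icc A B := hJsub.trans Ioo_subset_Icc_self
  have hJne : A'' ≤ B'' := by linarith
  -- the function H = ψ - t φ and its lower bound m on J
  set H : ℝ → ℝ := fun t => ψ t - t * φ t with hHdef
  have hHc : ContinuousOn H (Icc A B) := hψ.continuousOn.sub (continuousOn_id.mul hφc)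
  have hHne : ∀ t ∈ Icc A'' B'', H t ≠ 0 := by
    intro t ht
    have := htan t (hJK ht)
    rw [hHdef]; simp only
    rw [hφeq t (hJsub ht)]; exact this
  obtain ⟨tm, htm, hmin⟩ := isCompact_Icc.exists_isMinOn (nonempty_Icc.2 hJne)
    ((hHc.mono hJK).abs)
  set m := |H tm| with hmdef
  have hm : 0 < m := abs_pos.2 (hHne tm htm)
  have hmlb : ∀ t ∈ Icc A'' B'', m ≤ |H t| := fun t ht => hmin ht
  -- Lipschitz bound L for ψ on Icc A B
  obtain ⟨tL, htL, hmax'⟩ := isCompact_Icc.exists_isMaxOn (nonempty_Icc.2 hAB.le)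
    (hφc.abs)
  set L := |φ tL| with hLdef
  have hL0 : 0 ≤ L := abs_nonneg _
  have hmax : ∀ t ∈ Icc A B, |φ t| ≤ L := fun t ht => hmax' ht
  have hlip : ∀ x ∈ Icc A B, ∀ y ∈ Icc A B, |ψ y - ψ x| ≤ L * |y - x| := by
    intro x hx y hy
    have := Convex.norm_image_sub_le_of_norm_derivWithin_le (𝕜 := ℝ) hdiff
      (fun t ht => by rw [Real.norm_eq_abs]; exact hmax t ht) (convex_Icc A B) hx hy
    simpa [Real.norm_eq_abs] using this
  -- uniform continuity of φ
  have hbm : (0:ℝ) < m / (4 * b) := by positivity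
  have huc := (isCompact_Icc (a := A) (b := B)).uniformContinuousOn_of_continuous hφc
  rw [Metric.uniformContinuousOn_iff] at huc
  obtain ⟨η₁, hη₁, hucη⟩ := huc (m / (4 * b)) hbm
  set η := min (η₁ / 2) (min (A' - A'') (B'' - B')) with hηdef
  have hη : 0 < η := by
    apply lt_min (by linarith)
    exact lt_min (by linarith) (by linarith)
  have hηa : η ≤ A' - A'' := le_trans (min_le_right _ _) (min_le_left _ _)
  have hηb : η ≤ B'' - B' := le_trans (min_le_right _ _) (min_le_right _ _)
  have hη1 : η < η₁ := lt_of_le_of_lt (min_le_left _ _) (by linarith)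
  -- constants
  refine ⟨(L * (2 * b / m) + 1) / c, by positivity, min (m / 4) (m * η / (4 * b)), by positivity,
    ?_⟩
  intro δ hδ hδ₀ ξ₁ hξ₁ ξ₂ hξ₂
  have hδm : δ ≤ m / 4 := le_trans hδ₀ (min_le_left _ _)
  have hδη : δ ≤ m * η / (4 * b) := le_trans hδ₀ (min_le_right _ _)
  have hξJ : ξ₁ ∈ Icc A'' B'' := ⟨by linarith [hξ₁.1], by linarith [hξ₁.2]⟩
  have hξK : ξ₁ ∈ Icc A B := hJK hξJ
  have hξb : |ξ₁| ≤ b := by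
    have := hI hξK; exact le_of_lt (abs_lt.2 ⟨this.1, this.2⟩)
  have hIxJ : Icc (ξ₁ - η) (ξ₁ + η) ⊆ Icc A'' B'' := fun x hx =>
    ⟨by linarith [hx.1, hξ₁.1], by linarith [hx.2, hξ₁.2]⟩
  have hIxK : Icc (ξ₁ - η) (ξ₁ + η) ⊆ Icc A B := hIxJ.trans hJK
  have hIxO : Icc (ξ₁ - η) (ξ₁ + η) ⊆ Ioo A B := hIxJ.trans hJsub
  -- sign normalization
  set e : ℝ := if 0 < H ξ₁ then 1 else -1 with hedef
  have he : e = 1 ∨ e = -1 := by by_cases h : 0 < H ξ₁ <;> simp [hedef, h]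
  have heabs : |e| = 1 := by rcases he with h | h <;> simp [h]
  have heH : m ≤ e * H ξ₁ := by
    have h1 := hmlb ξ₁ hξJ
    by_cases h : 0 < H ξ₁
    · simp only [hedef, if_pos h]; rw [abs_of_pos h] at h1; linarith
    · simp only [hedef, if_neg h]
      push_neg at h
      rw [abs_of_nonpos h] at h1; linarith
  -- the function g̃
  set g : ℝ → ℝ := fun x => e * (ξ₂ * x - ξ₁ * ψ x) with hgdef
  have hgc : ContinuousOn g (Icc A B) :=
    (continuousOn_const.mul (((continuous_const.mul continuous_id).continuousOn).sub
      (continuousOn_const.mul hψ.continuousOn)))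
  -- derivative of g at interior points
  have hgd : ∀ x ∈ Ioo A B, HasDerivAt g (e * (ξ₂ - ξ₁ * deriv ψ x)) x := by
    intro x hx
    have h1 : HasDerivAt (fun x => ξ₂ * x - ξ₁ * ψ x) (ξ₂ - ξ₁ * deriv ψ x) x := by
      have h2 : HasDerivAt (fun x => ξ₂ * x) ξ₂ x := by
        simpa using (hasDerivAt_id x).const_mul ξ₂
      exact h2.sub (((hdAt x hx).hasDerivAt).const_mul ξ₁)
    simpa using h1.const_mul e
  -- lower bound for derivative of g on the small interval
  have hgd_lb : ∀ x ∈ Icc (ξ₁ - η) (ξ₁ + η), m / 2 ≤ e * (ξ₂ - ξ₁ * deriv ψ x) := by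
    intro x hx
    have hxO := hIxO hx
    have hφx : |φ x - φ ξ₁| ≤ m / (4 * b) := by
      have hd : dist x ξ₁ < η₁ := by
        rw [Real.dist_eq]
        have : |x - ξ₁| ≤ η := abs_le.2 ⟨by linarith [hx.1], by linarith [hx.2]⟩
        linarith
      have := hucη x (hIxK hx) ξ₁ hξK hd
      rw [Real.dist_eq] at this; linarith
    have hkey : e * (ξ₂ - ξ₁ * deriv ψ x)
        = e * H ξ₁ + e * (ξ₂ - ψ ξ₁) - e * (ξ₁ * (φ x - φ ξ₁)) := by
      rw [← hφeq x hxO, hHdef]; ring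
    rw [hkey]
    have h1 : |e * (ξ₂ - ψ ξ₁)| ≤ δ := by
      rw [abs_mul, heabs, one_mul]; exact hξ₂
    have h2 : |e * (ξ₁ * (φ x - φ ξ₁))| ≤ m / 4 := by
      rw [abs_mul, heabs, one_mul, abs_mul]
      calc |ξ₁| * |φ x - φ ξ₁| ≤ b * (m / (4 * b)) :=
            mul_le_mul hξb hφx (abs_nonneg _) hb.le
        _ = m / 4 := by field_simp
    have h1' := abs_le.1 h1
    have h2' := abs_le.1 h2
    have hh := h1'.1
    have hh2 := h2'.2
    set u := e * H ξ₁ with hu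
    set v := e * (ξ₂ - ψ ξ₁) with hv
    set w := e * (ξ₁ * (φ x - φ ξ₁)) with hw
    linarith [heH, hδm, hh, hh2]
  -- monotone-type estimate
  have hkey : ∀ x ∈ Icc (ξ₁ - η) (ξ₁ + η), ∀ y ∈ Icc (ξ₁ - η) (ξ₁ + η), x ≤ y →
      g x + m / 2 * (y - x) ≤ g y := by
    intro x hx y hy hxy
    have hmono : MonotoneOn (fun x => g x - m / 2 * x) (Icc (ξ₁ - η) (ξ₁ + η)) := by
      apply monotoneOn_of_deriv_nonneg (convex_Icc _ _)
      · exact ((hgc.mono hIxK).sub ((continuous_const.mul continuous_id).continuousOn))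
      · intro z hz
        rw [interior_Icc] at hz
        exact (((hgd z (hIxO (Ioo_subset_Icc_self hz))).sub
          ((hasDerivAt_id z).const_mul (m/2))).differentiableAt).differentiableWithinAt
      · intro z hz
        rw [interior_Icc] at hz
        have hd := (hgd z (hIxO (Ioo_subset_Icc_self hz))).sub
          (by simpa using (hasDerivAt_id z).const_mul (m/2))
        rw [(show HasDerivAt (fun x => g x - m / 2 * x) _ z from hd).deriv]
        have := hgd_lb z (Ioo_subset_Icc_self hz)
        linarith
    have := hmono hx hy hxy
    simp only at this
    linarith
  -- bound on g ξ₁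
  have hξ₁mem : ξ₁ ∈ Icc (ξ₁ - η) (ξ₁ + η) := ⟨by linarith, by linarith⟩
  have hgξ₁ : |g ξ₁| ≤ b * δ := by
    have : g ξ₁ = e * ξ₁ * (ξ₂ - ψ ξ₁) := by rw [hgdef]; ring
    rw [this, abs_mul, abs_mul, heabs, one_mul]
    exact mul_le_mul hξb hξ₂ (abs_nonneg _) hb.le
  have hbδη : b * δ ≤ m * η / 4 := by
    have := mul_le_mul_of_nonneg_left hδη hb.le
    calc b * δ ≤ b * (m * η / (4 * b)) := this
      _ = m * η / 4 := by field_simp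
  -- IVT
  have hmη : 0 < m * η := mul_pos hm hη
  have hgl : g (ξ₁ - η) ≤ 0 := by
    have h0 := hkey (ξ₁ - η) ⟨le_refl _, by linarith⟩ ξ₁ hξ₁mem (by linarith)
    have e1 : m / 2 * (ξ₁ - (ξ₁ - η)) = m * η / 2 := by ring
    rw [e1] at h0
    have h2 := (abs_le.1 hgξ₁).2
    linarith
  have hgr : 0 ≤ g (ξ₁ + η) := by
    have h0 := hkey ξ₁ hξ₁mem (ξ₁ + η) ⟨by linarith, le_refl _⟩ (by linarith)
    have e1 : m / 2 * (ξ₁ + η - ξ₁) = m * η / 2 := by ring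
    rw [e1] at h0
    have h1 := (abs_le.1 hgξ₁).1
    linarith
  obtain ⟨t₀, ht₀, hgt₀⟩ := intermediate_value_Icc (by linarith : ξ₁ - η ≤ ξ₁ + η)
    (hgc.mono hIxK) (⟨hgl, hgr⟩ : (0:ℝ) ∈ Icc (g (ξ₁ - η)) (g (ξ₁ + η)))
  have ht₀K : t₀ ∈ Icc A B := hIxK ht₀
  have hψt₀ : c < ψ t₀ := (hΓ t₀ ht₀K).1
  have hψt₀' : ψ t₀ ≠ 0 := by linarith
  -- relation ξ₂ * t₀ = ξ₁ * ψ t₀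
  have hrel : ξ₂ * t₀ = ξ₁ * ψ t₀ := by
    have he0 : e ≠ 0 := by rcases he with h | h <;> simp [h]
    have : e * (ξ₂ * t₀ - ξ₁ * ψ t₀) = 0 := hgt₀
    have := mul_eq_zero.1 this
    rcases this with h | h
    · exact absurd h he0
    · linarith
  -- distance bound |t₀ - ξ₁| ≤ 2bδ/m
  have hdist : m * |t₀ - ξ₁| ≤ 2 * (b * δ) := by
    rcases le_or_gt ξ₁ t₀ with h | h
    · have := hkey ξ₁ hξ₁mem t₀ ht₀ h
      rw [hgt₀] at this
      have h1 := (abs_le.1 hgξ₁).1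
      rw [abs_of_nonneg (by linarith : (0:ℝ) ≤ t₀ - ξ₁)]
      nlinarith [this, h1]
    · have := hkey t₀ ht₀ ξ₁ hξ₁mem h.le
      rw [hgt₀] at this
      have h2 := (abs_le.1 hgξ₁).2
      rw [abs_of_nonpos (by linarith : t₀ - ξ₁ ≤ 0), neg_sub]
      nlinarith [this, h2]
  -- define s
  refine ⟨ξ₂ / ψ t₀, ?_, t₀, ht₀K, ?_⟩
  · -- |1 - s| ≤ B₁ δ
    have h1 : (1 : ℝ) - ξ₂ / ψ t₀ = (ψ t₀ - ξ₂) / ψ t₀ := by field_simp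
    rw [h1, abs_div, abs_of_pos (by linarith : (0:ℝ) < ψ t₀)]
    have hnum : |ψ t₀ - ξ₂| ≤ L * (2 * b / m) * δ + δ := by
      have h2 : |ψ t₀ - ψ ξ₁| ≤ L * |t₀ - ξ₁| := hlip ξ₁ hξK t₀ ht₀K
      have h3 : |t₀ - ξ₁| ≤ 2 * (b * δ) / m := by
        rw [le_div_iff₀ hm]; linarith [hdist]
      have h4 : |ψ t₀ - ξ₂| ≤ |ψ t₀ - ψ ξ₁| + |ψ ξ₁ - ξ₂| := by
        have := abs_sub_le (ψ t₀) (ψ ξ₁) ξ₂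
        linarith
      have h5 : |ψ ξ₁ - ξ₂| = |ξ₂ - ψ ξ₁| := abs_sub_comm _ _
      have h6 : L * |t₀ - ξ₁| ≤ L * (2 * (b * δ) / m) :=
        mul_le_mul_of_nonneg_left h3 hL0
      have h7 : L * (2 * (b * δ) / m) = L * (2 * b / m) * δ := by ring
      rw [h5] at h4
      linarith
    calc |ψ t₀ - ξ₂| / ψ t₀ ≤ (L * (2 * b / m) * δ + δ) / c := by
          apply div_le_div₀ (by positivity) hnum hc (by linarith)
      _ = (L * (2 * b / m) + 1) / c * δ := by ring
  · -- the point equality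
    have hs1 : ξ₂ / ψ t₀ * t₀ = ξ₁ := by
      field_simp
      linarith [hrel]
    have hs2 : ξ₂ / ψ t₀ * ψ t₀ = ξ₂ := by field_simp
    simp only [Prod.smul_mk, smul_eq_mul, Prod.mk.injEq]
    exact ⟨hs1.symm, hs2.symm⟩
end

section
/- Let ψ be C^∞ on I with ψ > 0, Ψ(t) = t/ψ(t), Ψ' > 0 on I, and c₁ ≤ Ψ' ≤ c₂ on I with c₁ > 0. For δ > 0 small, let a_k = -b + kδ^{1/2} and b_j = c + jδ^{1/2} partition [-b,b] and [c,d] (0 < c < d). For ℓ with [a_{ℓ-2}, a_{ℓ+1}] ⊂ I, define Δ_ℓ = {(ξ₁,ξ₂) : Ψ(a_{ℓ-1})ξ₂ ≤ ξ₁ ≤ Ψ(a_ℓ)ξ₂, ξ₂ > 0} and Δ̃_ℓ = Δ_{ℓ-1} ∪ Δ_ℓ ∪ Δ_{ℓ+1}. Then there is a constant C, independent of k, j and δ, such that for every rectangle ω_k × H_j = [a_{k-1},a_k] × [b_{j-1},b_j] ⊂ [-b,b] × [c,d], the number of indices ℓ with Δ̃_ℓ ∩ (ω_k × H_j) ≠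 ∅ is at most C. -/
open Set

lemma card_helper (S : Set ℤ) (N : ℕ) (h : ∀ x ∈ S, ∀ y ∈ S, x ≤ y + N) :
    S.ncard ≤ 2 * N + 1 := by
  rcases S.eq_empty_or_nonempty with rfl | ⟨ℓ₀, hℓ₀⟩
  · simp
  · have hsub : S ⊆ ↑(Finset.Icc (ℓ₀ - (N:ℤ)) (ℓ₀ + N)) := by
      intro x hx
      simp only [Finset.coe_Icc, Set.mem_Icc]
      exact ⟨by have := h ℓ₀ hℓ₀ x hx; omega, h x hx ℓ₀ hℓ₀⟩
    calc S.ncard ≤ (↑(Finset.Icc (ℓ₀ - (N:ℤ)) (ℓ₀ + N)) : Set ℤ).ncard :=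
          Set.ncard_le_ncard hsub (Finset.finite_toSet _)
      _ = (Finset.Icc (ℓ₀ - (N:ℤ)) (ℓ₀ + N)).card := Set.ncard_coe_finset _
      _ ≤ 2 * N + 1 := by rw [Int.card_Icc]; omega

set_option maxHeartbeats 1000000 in
/-- Bounded overlap of the angular sectors Δ̃_ℓ with a fixed δ^{1/2} × δ^{1/2}
square ω_k × H_j ⊂ [-b,b] × [c,d]. -/
theorem stmt_7 (A B b c d c₁ c₂ : ℝ) (hAB : A < B) (hc₁ : 0 < c₁) (hb : 0 < b)
    (hc : 0 < c) (hcd : c < d) (hI : Icc A B ⊆ Ioo (-b) b)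
    (ψ : ℝ → ℝ) (hψ : ContDiffOn ℝ (⊤ : ℕ∞) ψ (Icc A B))
    (hψpos : ∀ t ∈ Icc A B, 0 < ψ t)
    (hΨ' : ∀ t ∈ Icc A B,
      c₁ ≤ deriv (fun u => u / ψ u) t ∧ deriv (fun u => u / ψ u) t ≤ c₂) :
    ∃ (C : ℕ) (δ₀ : ℝ), 0 < δ₀ ∧ ∀ δ : ℝ, 0 < δ → δ ≤ δ₀ →
      ∀ k j : ℤ,
        (Icc (-b + ((k:ℝ)-1) * Real.sqrt δ) (-b + (k:ℝ) * Real.sqrt δ) ×ˢ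
          Icc (c + ((j:ℝ)-1) * Real.sqrt δ) (c + (j:ℝ) * Real.sqrt δ)) ⊆
            Icc (-b) b ×ˢ Icc c d →
        Set.ncard {ℓ : ℤ |
          Icc (-b + ((ℓ:ℝ)-2) * Real.sqrt δ) (-b + ((ℓ:ℝ)+1) * Real.sqrt δ) ⊆ Icc A B ∧
          ((⋃ m ∈ Icc (ℓ-1) (ℓ+1), {ξ : ℝ × ℝ |
              ((-b + ((m:ℝ)-1)*Real.sqrt δ) / ψ (-b + ((m:ℝ)-1)*Real.sqrt δ)) * ξ.2 ≤ ξ.1 ∧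
              ξ.1 ≤ ((-b + (m:ℝ)*Real.sqrt δ) / ψ (-b + (m:ℝ)*Real.sqrt δ)) * ξ.2 ∧
              0 < ξ.2}) ∩
            (Icc (-b + ((k:ℝ)-1) * Real.sqrt δ) (-b + (k:ℝ) * Real.sqrt δ) ×ˢ
              Icc (c + ((j:ℝ)-1) * Real.sqrt δ) (c + (j:ℝ) * Real.sqrt δ))).Nonempty} ≤ C := by
  -- differentiability of Ψ at points of [A,B]
  have hdiffAt : ∀ t ∈ Icc A B, DifferentiableAt ℝ (fun u => u / ψ u) t := by
    intro t ht
    by_contra h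
    have h1 := (hΨ' t ht).1
    rw [deriv_zero_of_not_differentiableAt h] at h1
    linarith
  -- growth lemma
  have hgrow : ∀ x ∈ Icc A B, ∀ y ∈ Icc A B, x ≤ y →
      c₁ * (y - x) ≤ y / ψ y - x / ψ x := by
    intro x hx y hy hxy
    rcases eq_or_lt_of_le hxy with rfl | hlt
    · simp
    · have hcont : ContinuousOn (fun u => u / ψ u) (Icc x y) := fun t ht =>
        ((hdiffAt t ⟨le_trans hx.1 ht.1, le_trans ht.2 hy.2⟩).continuousAt).continuousWithinAt
      have hdiff : ∀ t ∈ Ioo x y, HasDerivAt (fun u => u / ψ u)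
          (deriv (fun u => u / ψ u) t) t := fun t ht =>
        (hdiffAt t ⟨le_trans hx.1 ht.1.le, le_trans ht.2.le hy.2⟩).hasDerivAt
      obtain ⟨ξc, hξc, heq⟩ := exists_hasDerivAt_eq_slope (fun u => u / ψ u)
        (deriv (fun u => u / ψ u)) hlt hcont hdiff
      have hξmem : ξc ∈ Icc A B := ⟨le_trans hx.1 hξc.1.le, le_trans hξc.2.le hy.2⟩
      have h1 := (hΨ' ξc hξmem).1
      rw [heq] at h1
      have := (le_div_iff₀ (by linarith : (0:ℝ) < y - x)).mp h1
      linarith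
  set K : ℝ := (b + d) / c ^ 2 with hKdef
  have hd : 0 < d := lt_trans hc hcd
  have hKpos : 0 < K := by positivity
  set N : ℕ := ⌈K / c₁⌉₊ + 4 with hNdef
  have hNge : K / c₁ + 4 ≤ (N : ℝ) := by
    have := Nat.le_ceil (K / c₁)
    push_cast [hNdef]
    linarith
  refine ⟨2 * N + 1, 1, one_pos, ?_⟩
  intro δ hδ _ k j hsq
  set s := Real.sqrt δ with hs
  have hspos : 0 < s := Real.sqrt_pos.mpr hδ
  apply card_helper
  intro x hx y hy
  by_contra hcon
  push_neg at hcon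
  -- hcon : y + N < x
  simp only [Set.mem_setOf_eq] at hx hy
  obtain ⟨hxsub, ξ, hξmem⟩ := hx
  obtain ⟨hysub, η, hηmem⟩ := hy
  obtain ⟨hξU, hξsq⟩ := hξmem
  obtain ⟨hηU, hηsq⟩ := hηmem
  simp only [Set.mem_iUnion, Set.mem_setOf_eq, Set.mem_Icc, exists_prop] at hξU hηU
  obtain ⟨mx, ⟨hmx1, hmx2⟩, hPx, _, _⟩ := hξU
  obtain ⟨my, ⟨hmy1, hmy2⟩, _, hQy, _⟩ := hηU
  -- membership of grid points in [A,B]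
  have amem : ∀ ℓ m : ℤ, Icc (-b + ((ℓ:ℝ)-2)*s) (-b + ((ℓ:ℝ)+1)*s) ⊆ Icc A B →
      ℓ - 2 ≤ m → m ≤ ℓ + 1 → (-b + (m:ℝ)*s) ∈ Icc A B := by
    intro ℓ m hsub h1 h2
    apply hsub
    have hc1 : ((ℓ:ℝ) - 2) ≤ (m:ℝ) := by exact_mod_cast h1
    have hc2 : (m:ℝ) ≤ (ℓ:ℝ) + 1 := by exact_mod_cast h2
    have g1 := mul_le_mul_of_nonneg_right hc1 hspos.le
    have g2 := mul_le_mul_of_nonneg_right hc2 hspos.le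
    exact ⟨by linarith, by linarith⟩
  have hmxA : (-b + ((mx:ℝ)-1)*s) ∈ Icc A B := by
    have := amem x (mx - 1) hxsub (by omega) (by omega)
    push_cast at this
    convert this using 3 <;> ring
  have hmyA : (-b + (my:ℝ)*s) ∈ Icc A B := amem y my hysub (by omega) (by omega)
  -- points of square lie in [-b,b] × [c,d]
  have hξbox := hsq hξsq
  have hηbox := hsq hηsq
  simp only [Set.mem_prod, Set.mem_Icc] at hξbox hηbox hξsq hηsq
  set u₁ := ξ.1; set u₂ := ξ.2; set v₁ := η.1; set v₂ := η.2
  have hu₂c : c ≤ u₂ := hξbox.2.1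
  have hv₂c : c ≤ v₂ := hηbox.2.1
  have hu₂d : u₂ ≤ d := hξbox.2.2
  have hv₂d : v₂ ≤ d := hηbox.2.2
  have hu₁b : |u₁| ≤ b := abs_le.mpr ⟨hξbox.1.1, hξbox.1.2⟩
  have hu₂pos : 0 < u₂ := lt_of_lt_of_le hc hu₂c
  have hv₂pos : 0 < v₂ := lt_of_lt_of_le hc hv₂c
  -- the ratios differ by at most s in ξ₁ and s in ξ₂
  have hdiff1 : |u₁ - v₁| ≤ s := by
    rw [abs_le]
    constructor
    · have := hξsq.1.1; have := hηsq.1.2; linarith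
    · have := hξsq.1.2; have := hηsq.1.1; linarith
  have hdiff2 : |v₂ - u₂| ≤ s := by
    rw [abs_le]
    constructor
    · have := hηsq.2.1; have := hξsq.2.2; linarith
    · have := hηsq.2.2; have := hξsq.2.1; linarith
  -- numerator bound
  have hnum : u₁ * v₂ - v₁ * u₂ ≤ (b + d) * s := by
    have e1 : u₁ * (v₂ - u₂) ≤ b * s := by
      have : |u₁ * (v₂ - u₂)| ≤ b * s := by
        rw [abs_mul]
        exact mul_le_mul hu₁b hdiff2 (abs_nonneg _) hb.le
      calc u₁ * (v₂ - u₂) ≤ |u₁ * (v₂ - u₂)| := le_abs_self _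
        _ ≤ b * s := this
    have e2 : (u₁ - v₁) * u₂ ≤ s * d := by
      have : |(u₁ - v₁) * u₂| ≤ s * d := by
        rw [abs_mul]
        exact mul_le_mul hdiff1 (by rwa [abs_of_pos hu₂pos]) (abs_nonneg _) hspos.le
      calc (u₁ - v₁) * u₂ ≤ |(u₁ - v₁) * u₂| := le_abs_self _
        _ ≤ s * d := this
    linarith only [e1, e2, hspos, hd, hb]
  -- growth between the two sectors
  set P : ℝ := (-b + ((mx:ℝ)-1)*s) / ψ (-b + ((mx:ℝ)-1)*s) with hPdef
  set Q : ℝ := (-b + (my:ℝ)*s) / ψ (-b + (my:ℝ)*s) with hQdef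
  have hmlt : (my:ℝ) * s ≤ ((mx:ℝ)-1) * s := by
    have h1 : (my:ℝ) ≤ (mx:ℝ) - 1 := by
      have : my + 1 ≤ mx := by omega
      have h2 : ((my:ℝ) + 1) ≤ (mx:ℝ) := by exact_mod_cast this
      linarith
    exact mul_le_mul_of_nonneg_right h1 hspos.le
  have hgrow' := hgrow (-b + (my:ℝ)*s) hmyA (-b + ((mx:ℝ)-1)*s) hmxA (by linarith)
  -- c₁ * ((N-2) * s) ≤ P - Q
  have hNcast : ((N:ℝ) - 2) ≤ ((mx:ℝ) - 1) - (my:ℝ) := by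
    have : (N:ℤ) - 2 ≤ (mx - 1) - my := by omega
    have h2 : ((N:ℤ) : ℝ) - 2 ≤ ((mx:ℝ) - 1) - (my:ℝ) := by exact_mod_cast this
    exact_mod_cast h2
  have hPQ : c₁ * (((N:ℝ) - 2) * s) ≤ P - Q := by
    have harg : ((-b + ((mx:ℝ)-1)*s) - (-b + (my:ℝ)*s)) = (((mx:ℝ)-1) - my) * s := by ring
    rw [harg] at hgrow'
    have : c₁ * (((N:ℝ) - 2) * s) ≤ c₁ * ((((mx:ℝ)-1) - my) * s) := by
      apply mul_le_mul_of_nonneg_left _ hc₁.le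
      exact mul_le_mul_of_nonneg_right hNcast hspos.le
    exact le_trans this hgrow'
  have hN2 : (0:ℝ) ≤ (N:ℝ) - 2 := by
    have : (4:ℝ) ≤ (N:ℝ) := by exact_mod_cast (by omega : 4 ≤ (N:ℤ))
    linarith
  have hPQpos : 0 ≤ P - Q := by
    have := mul_nonneg hc₁.le (mul_nonneg hN2 hspos.le)
    linarith
  -- sector inequalities give P ≤ u₁/u₂ and v₁/v₂ ≤ Q, hence
  have e1 : P * u₂ * v₂ ≤ u₁ * v₂ := by
    have := mul_le_mul_of_nonneg_right hPx hv₂pos.le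
    linarith
  have e2 : v₁ * u₂ ≤ Q * v₂ * u₂ := by
    have := mul_le_mul_of_nonneg_right hQy hu₂pos.le
    linarith
  have e3 : (P - Q) * (u₂ * v₂) ≤ (b + d) * s := by linarith only [e1, e2, hnum]
  have hc2u : c ^ 2 ≤ u₂ * v₂ := by
    have h := mul_le_mul hu₂c hv₂c hc.le (hc.le.trans hu₂c)
    rw [pow_two]; exact h
  have e4 : c₁ * (((N:ℝ) - 2) * s) * c ^ 2 ≤ (b + d) * s := by
    have g1 := mul_le_mul_of_nonneg_left hc2u hPQpos
    have g2 := mul_le_mul_of_nonneg_right hPQ (sq_nonneg c)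
    linarith only [g1, g2, e3]
  -- final contradiction
  have hKc : K * c ^ 2 = b + d := by
    rw [hKdef]; field_simp
  have hKdiv : c₁ * (K / c₁) = K := by field_simp
  have hKN : K / c₁ + 2 ≤ (N:ℝ) - 2 := by linarith
  have h6 : K + 2 * c₁ ≤ c₁ * ((N:ℝ) - 2) := by
    have h := mul_le_mul_of_nonneg_left hKN hc₁.le
    rw [mul_add, hKdiv] at h
    linarith
  have h7 : (K + 2 * c₁) * c ^ 2 ≤ c₁ * ((N:ℝ) - 2) * c ^ 2 :=
    mul_le_mul_of_nonneg_right h6 (sq_nonneg c)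
  have h8 : b + d + 2 * c₁ * c ^ 2 ≤ c₁ * ((N:ℝ) - 2) * c ^ 2 := by linarith only [h7, hKc]
  have h10 : c₁ * ((N:ℝ) - 2) * c ^ 2 ≤ b + d := by
    have h9 : c₁ * ((N:ℝ) - 2) * c ^ 2 * s ≤ (b + d) * s := by linarith only [e4]
    exact le_of_mul_le_mul_right h9 hspos
  have hpos : 0 < 2 * c₁ * c ^ 2 := by positivity
  linarith only [h8, h10, hpos]
end
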